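/- arXiv:0912.1279 — 7 statements merged into one kernel-verified Lean document; each statement's English description precedes it below -/
import Mathlib

section
/- For all nonnegative integers N, n, i, the identity ∑_{k=i}^{⌊(N−n)/2⌋} y^{k−i} · C(N, n+2k) · (1+y)^{N−n−2k} · (C(n+2k, k−i) − C(n+2k, k−i−1)) = ∑_{j=0}^{N−n−2i} y^j · (C(N,j)·C(N, n+2i+j) − C(N, j−1)·C(N, n+2i+j+1)) holds as an identity of polynomials in y (equivalently for every real/natural y). -/
/-- Binomial coefficient with integer lower index, zero when the lower index is negative. -/
def intChoose (a : ℕ) (b : ℤ) : ℕ := if 0 ≤ b then a.choose b.toNat else 0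

/-!
Put m = n + 2i. Splitting the difference of binomials on each side and shifting the summation
index by one turns the left side into T_N(m) - y T_N(m + 2) and the right side into
S_N(m) - y S_N(m + 2), where (sums of `trinomTerm` and `convTerm` below)
  T_N(m) = ∑_k y^k C(N, m+2k) C(m+2k, k) (1+y)^(N-m-2k),   S_N(m) = ∑_j y^j C(N, j) C(N, m+j).
Both are the coefficient of x^m in ((1 + y) + x + y/x)^N = ((1 + x)(1 + y/x))^N, expanded as a
trinomial and as a product respectively. Instead of extracting Laurent coefficients we show that
both satisfy c_{N+1}(m) = (1 + y) c_N(m) + c_N(m - 1) + y c_N(m + 1) and induct on N, for all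
integers m at once.
-/

open Finset

@[simp]
lemma intChoose_natCast (a b : ℕ) : intChoose a b = a.choose b := by
  simp [intChoose]

lemma intChoose_of_neg {a : ℕ} {b : ℤ} (hb : b < 0) : intChoose a b = 0 := by
  simp [intChoose, hb.not_ge]

lemma intChoose_of_lt {a : ℕ} {b : ℤ} (hab : a < b) : intChoose a b = 0 := by
  rw [intChoose, if_pos (by omega), Nat.choose_eq_zero_of_lt (by omega)]

lemma intChoose_succ (a : ℕ) (b : ℤ) :
    intChoose (a + 1) b = intChoose a b + intChoose a (b - 1) := by
  rcases lt_trichotomy b 0 with hb | rfl | hb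
  · simp [intChoose_of_neg hb, intChoose_of_neg (show b - 1 < 0 by omega)]
  · simp [intChoose]
  · obtain ⟨c, rfl⟩ : ∃ c : ℕ, b = c + 1 := ⟨(b - 1).toNat, by omega⟩
    rw [add_sub_cancel_right, ← Nat.cast_succ, intChoose_natCast, intChoose_natCast,
      intChoose_natCast, Nat.choose_succ_succ', add_comm]

section
variable {R : Type*} [CommRing R] (y : R)

-- Where `m + 2 * k ∉ [0, N]` the factor `intChoose N (m + 2 * k)` vanishes, so the truncations
-- by `toNat` are harmless.
def trinomTerm (N : ℕ) (m : ℤ) (k : ℕ) : R :=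
  y ^ k * intChoose N (m + 2 * k) * (m + 2 * k).toNat.choose k *
    (1 + y) ^ (N - m - 2 * k).toNat

def convTerm (N : ℕ) (m : ℤ) (j : ℕ) : R :=
  y ^ j * N.choose j * intChoose N (m + j)

variable {y}

lemma trinomTerm_of_lt {N k : ℕ} (m : ℤ) (h : N < k) : trinomTerm y N m k = 0 := by
  rcases lt_or_ge (N : ℤ) (m + 2 * k) with hN | hN
  · simp [trinomTerm, intChoose_of_lt hN]
  · simp [trinomTerm, Nat.choose_eq_zero_of_lt (show (m + 2 * k).toNat < k by omega)]

lemma convTerm_of_lt {N j : ℕ} (m : ℤ) (h : N < j) : convTerm y N m j = 0 := by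
  simp [convTerm, Nat.choose_eq_zero_of_lt h]

variable (y)

lemma sum_trinomTerm_shift (N : ℕ) (m : ℤ) (M : ℕ) :
    ∑ k ∈ range (M + 1), y ^ k * intChoose N (m + 2 * k) * intChoose (m + 2 * k).toNat (k - 1) *
      (1 + y) ^ (N - m - 2 * k).toNat = y * ∑ k ∈ range M, trinomTerm y N (m + 2) k := by
  rw [sum_range_succ', mul_sum]
  simp only [CharP.cast_eq_zero, zero_sub, intChoose_of_neg (show (-1 : ℤ) < 0 by omega),
    Nat.cast_zero, mul_zero, zero_mul, add_zero]
  refine sum_congr rfl fun k _ => ?_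
  rw [trinomTerm, show m + 2 * (k + 1 : ℕ) = m + 2 + 2 * k by push_cast; ring,
    show N - m - 2 * (k + 1 : ℕ) = N - (m + 2) - 2 * k by push_cast; ring]
  push_cast
  rw [add_sub_cancel_right, intChoose_natCast]
  ring

lemma sum_convTerm_shift (N : ℕ) (m : ℤ) (M : ℕ) :
    ∑ j ∈ range (M + 1), y ^ j * intChoose N (j - 1) * intChoose N (m + j + 1) =
      y * ∑ j ∈ range M, convTerm y N (m + 2) j := by
  rw [sum_range_succ', mul_sum]
  simp only [CharP.cast_eq_zero, zero_sub, intChoose_of_neg (show (-1 : ℤ) < 0 by omega),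
    Nat.cast_zero, mul_zero, zero_mul, add_zero]
  refine sum_congr rfl fun j _ => ?_
  rw [convTerm, show m + (j + 1 : ℕ) + 1 = m + 2 + j by push_cast; ring]
  push_cast
  rw [add_sub_cancel_right, intChoose_natCast]
  ring

lemma trinomTerm_succ (N : ℕ) (m : ℤ) (k : ℕ) :
    trinomTerm y (N + 1) m k = (1 + y) * trinomTerm y N m k + trinomTerm y N (m - 1) k +
      y ^ k * intChoose N (m - 1 + 2 * k) * intChoose (m - 1 + 2 * k).toNat (k - 1) *
        (1 + y) ^ (N - (m - 1) - 2 * k).toNat := by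
  have hpow : (intChoose N (m + 2 * k) : R) * (1 + y) ^ (N - (m - 1) - 2 * k).toNat =
      intChoose N (m + 2 * k) * ((1 + y) * (1 + y) ^ (N - m - 2 * k).toNat) := by
    rcases le_or_gt (m + 2 * k) N with h | h
    · rw [← pow_succ', show (N - (m - 1) - 2 * k).toNat = (N - m - 2 * k).toNat + 1 by omega]
    · simp [intChoose_of_lt h]
  have hpascal : intChoose N (m - 1 + 2 * k) * (m + 2 * k).toNat.choose k =
      intChoose N (m - 1 + 2 * k) *
        ((m - 1 + 2 * k).toNat.choose k + intChoose (m - 1 + 2 * k).toNat (k - 1)) := by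
    rcases le_or_gt 0 (m - 1 + 2 * k) with h | h
    · rw [show (m + 2 * k).toNat = (m - 1 + 2 * k).toNat + 1 by omega, ← intChoose_natCast,
        intChoose_succ, intChoose_natCast]
    · simp [intChoose_of_neg h]
  rw [trinomTerm, trinomTerm, trinomTerm, Nat.cast_succ, intChoose_succ,
    show m + 2 * k - 1 = m - 1 + 2 * k by ring,
    show N + 1 - m - 2 * k = N - (m - 1) - 2 * k by ring]
  have hpascal' := congrArg (Nat.cast : ℕ → R) hpascal
  push_cast at hpascal' ⊢
  linear_combination y ^ k * (m + 2 * k).toNat.choose k * hpow +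
    y ^ k * (1 + y) ^ (N - (m - 1) - 2 * k).toNat * hpascal'

lemma convTerm_succ (N : ℕ) (m : ℤ) (j : ℕ) :
    convTerm y (N + 1) m j = convTerm y N m j + convTerm y N (m - 1) j +
      y ^ j * intChoose N (j - 1) * intChoose N (m - 1 + j + 1) +
      y ^ j * intChoose N (j - 1) * intChoose N (m - 2 + j + 1) := by
  rw [convTerm, convTerm, convTerm, ← intChoose_natCast, ← intChoose_natCast N,
    intChoose_succ, intChoose_succ, show m - 1 + j + 1 = m + j by ring,
    show m - 2 + j + 1 = m - 1 + j by ring, show m + j - 1 = m - 1 + j by ring]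
  push_cast
  ring

lemma sum_trinomTerm_succ (N : ℕ) (m : ℤ) :
    ∑ k ∈ range (N + 2), trinomTerm y (N + 1) m k =
      (1 + y) * ∑ k ∈ range (N + 1), trinomTerm y N m k +
        ∑ k ∈ range (N + 1), trinomTerm y N (m - 1) k +
        y * ∑ k ∈ range (N + 1), trinomTerm y N (m + 1) k := by
  simp only [trinomTerm_succ, sum_add_distrib, ← mul_sum]
  rw [sum_trinomTerm_shift, show m - 1 + 2 = m + 1 by ring,
    sum_range_succ _ (N + 1), sum_range_succ _ (N + 1),
    trinomTerm_of_lt _ (Nat.lt_succ_self N), trinomTerm_of_lt _ (Nat.lt_succ_self N)]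
  ring

lemma sum_convTerm_succ (N : ℕ) (m : ℤ) :
    ∑ j ∈ range (N + 2), convTerm y (N + 1) m j =
      (1 + y) * ∑ j ∈ range (N + 1), convTerm y N m j +
        ∑ j ∈ range (N + 1), convTerm y N (m - 1) j +
        y * ∑ j ∈ range (N + 1), convTerm y N (m + 1) j := by
  simp only [convTerm_succ, sum_add_distrib]
  rw [sum_convTerm_shift, sum_convTerm_shift, show m - 1 + 2 = m + 1 by ring,
    show m - 2 + 2 = m by ring, sum_range_succ _ (N + 1), sum_range_succ _ (N + 1),
    convTerm_of_lt _ (Nat.lt_succ_self N), convTerm_of_lt _ (Nat.lt_succ_self N)]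
  ring

theorem sum_trinomTerm_eq_sum_convTerm (N : ℕ) (m : ℤ) :
    ∑ k ∈ range (N + 1), trinomTerm y N m k = ∑ j ∈ range (N + 1), convTerm y N m j := by
  induction N generalizing m with
  | zero =>
    rcases lt_trichotomy m 0 with h | rfl | h
    · simp [trinomTerm, convTerm, intChoose_of_neg h]
    · simp [trinomTerm, convTerm, intChoose]
    · simp [trinomTerm, convTerm, intChoose_of_lt h]
  | succ N ih => rw [sum_trinomTerm_succ, sum_convTerm_succ, ih, ih, ih]

lemma sum_Icc_eq_sub_sum_trinomTerm (N n i : ℕ) :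
    ∑ k ∈ Icc i ((N - n) / 2),
      y ^ (k - i) * (N.choose (n + 2 * k) : R) * (1 + y) ^ (N - n - 2 * k) *
        ((intChoose (n + 2 * k) ((k : ℤ) - i) : R) -
          (intChoose (n + 2 * k) ((k : ℤ) - i - 1) : R)) =
      ∑ k ∈ range (N + 1), trinomTerm y N (n + 2 * i) k -
        y * ∑ k ∈ range (N + 1), trinomTerm y N (n + 2 * i + 2) k := by
  rw [← Ico_add_one_right_eq_Icc, sum_Ico_eq_sum_range,
    ← eventually_constant_sum (N := (N - n) / 2 + 1 - i) (n := N + 1 + 1) ?_ (by omega),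
    ← eventually_constant_sum (fun k hk => trinomTerm_of_lt (n + 2 * i : ℤ) hk) (N + 1).le_succ,
    ← sum_trinomTerm_shift, ← sum_sub_distrib]
  · refine sum_congr rfl fun k _ => ?_
    have e1 : n + 2 * (i + k) = ((n + 2 * i : ℤ) + 2 * k).toNat := by omega
    have e2 : N - n - 2 * (i + k) = (N - (n + 2 * i : ℤ) - 2 * k).toNat := by omega
    have e3 : ((i + k : ℕ) : ℤ) - i = k := by push_cast; ring
    rw [trinomTerm, Nat.add_sub_cancel_left, e2, e3, ← intChoose_natCast N, e1,
      Int.toNat_of_nonneg (by omega), ← intChoose_natCast _ k]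
    ring
  · intro k hk
    rw [Nat.choose_eq_zero_of_lt (by omega)]
    simp

lemma sum_range_eq_sub_sum_convTerm (N n i : ℕ) :
    ∑ j ∈ range (N - n - 2 * i + 1),
      y ^ j * ((N.choose j : R) * (N.choose (n + 2 * i + j) : R) -
        (intChoose N ((j : ℤ) - 1) : R) * (N.choose (n + 2 * i + j + 1) : R)) =
      ∑ j ∈ range (N + 1), convTerm y N (n + 2 * i) j -
        y * ∑ j ∈ range (N + 1), convTerm y N (n + 2 * i + 2) j := by
  rw [← eventually_constant_sum (N := N - n - 2 * i + 1) (n := N + 1 + 1) ?_ (by omega),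
    ← eventually_constant_sum (fun j hj => convTerm_of_lt (n + 2 * i : ℤ) hj) (N + 1).le_succ,
    ← sum_convTerm_shift, ← sum_sub_distrib]
  · refine sum_congr rfl fun j _ => ?_
    simp only [convTerm, ← intChoose_natCast N]
    push_cast
    ring
  · intro j hj
    rw [Nat.choose_eq_zero_of_lt (show N < n + 2 * i + j by omega),
      Nat.choose_eq_zero_of_lt (show N < n + 2 * i + j + 1 by omega)]
    simp

end

theorem stmt0 (N n i : ℕ) (y : ℝ) :
    ∑ k ∈ Finset.Icc i ((N - n) / 2),
      y ^ (k - i) * (N.choose (n + 2 * k) : ℝ) * (1 + y) ^ (N - n - 2 * k) *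
        ((intChoose (n + 2 * k) ((k : ℤ) - i) : ℝ) -
          (intChoose (n + 2 * k) ((k : ℤ) - i - 1) : ℝ))
    = ∑ j ∈ Finset.range (N - n - 2 * i + 1),
      y ^ j * ((N.choose j : ℝ) * (N.choose (n + 2 * i + j) : ℝ) -
        (intChoose N ((j : ℤ) - 1) : ℝ) * (N.choose (n + 2 * i + j + 1) : ℝ)) := by
  rw [sum_Icc_eq_sub_sum_trinomTerm, sum_range_eq_sub_sum_convTerm,
    sum_trinomTerm_eq_sum_convTerm, sum_trinomTerm_eq_sum_convTerm]
end

section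
/- Carlitz's q-Stirling numbers of the second kind satisfy the closed formula S₂[N+1, k+1] = (1−q)^{−(N−k)} · ∑_{j=0}^{N−k} (−q)^j · C(N, k+j) · qbinom(k+j, j), valid for 0 ≤ k ≤ N, as an identity in the field of rational functions in q. -/
/-- Carlitz's q-Stirling numbers of the second kind, defined by the recurrence
`S₂[n+1,k+1] = S₂[n,k] + [k+1]_q S₂[n,k+1]`, in the field of rational functions in `q`. -/
noncomputable def qStirling2 : ℕ → ℕ → RatFunc ℚ
  | 0, 0 => 1
  | 0, _ + 1 => 0
  | _ + 1, 0 => 0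
  | n + 1, k + 1 => qStirling2 n k +
      (∑ i ∈ Finset.range (k + 1), (RatFunc.X : RatFunc ℚ) ^ i) * qStirling2 n (k + 1)

/-- The Gaussian q-binomial coefficient, via the q-Pascal recurrence. -/
noncomputable def qbinom : ℕ → ℕ → RatFunc ℚ
  | _, 0 => 1
  | 0, _ + 1 => 0
  | n + 1, k + 1 => qbinom n k + RatFunc.X ^ (k + 1) * qbinom n (k + 1)


/-! With `N = k + m`, multiplying by `(1 - q)^m` and using `(1 - q) [k+2]_q = 1 - q^(k+2)` turns
Carlitz's recurrence into `T(k+1, m+1) = T(k, m+1) + (1 - q^(k+2)) T(k+1, m)`. The sum satisfies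
the same recurrence: split `C(k+m+2, k+1+j)` by Pascal's rule and expand `[k+1+j, j]_q` by the
second q-Pascal rule. The boundary values agree too: both sides are `1` at `m = 0`, and at `k = 0`
the sum is the binomial expansion of `(1 - q)^m`. -/

open Finset

local notation "q" => (RatFunc.X : RatFunc ℚ)

lemma qbinom_succ_succ (n k : ℕ) :
    qbinom (n + 1) (k + 1) = qbinom n k + q ^ (k + 1) * qbinom n (k + 1) := by
  rw [qbinom]

lemma qbinom_of_lt : ∀ {n k : ℕ}, n < k → qbinom n k = 0
  | 0, _ + 1, _ => by rw [qbinom]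
  | n + 1, k + 1, h => by
    rw [qbinom, qbinom_of_lt (by omega : n < k), qbinom_of_lt (by omega : n < k + 1)]
    ring

lemma qbinom_self : ∀ n : ℕ, qbinom n n = 1
  | 0 => by rw [qbinom]
  | n + 1 => by rw [qbinom, qbinom_self n, qbinom_of_lt n.lt_succ_self]; ring

/-- The second q-Pascal rule. -/
lemma qbinom_add_succ_succ : ∀ n j : ℕ,
    qbinom (n + j + 1) (j + 1) = q ^ n * qbinom (n + j) j + qbinom (n + j) (j + 1)
  | 0, j => by
    rw [Nat.zero_add, qbinom_self, qbinom_self, qbinom_of_lt j.lt_succ_self]; ring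
  | n + 1, 0 => by
    have ih := qbinom_add_succ_succ n 0
    have h₁ := qbinom_succ_succ (n + 1) 0
    have h₂ := qbinom_succ_succ n 0
    simp only [Nat.add_zero, Nat.zero_add, qbinom.eq_1] at ih h₁ h₂ ⊢
    linear_combination h₁ + q * ih - h₂
  | n + 1, j + 1 => by
    have ih₁ := qbinom_add_succ_succ (n + 1) j
    have ih₂ := qbinom_add_succ_succ n (j + 1)
    have h₁ := qbinom_succ_succ (n + j + 2) (j + 1)
    have h₂ := qbinom_succ_succ (n + j + 1) j
    have h₃ := qbinom_succ_succ (n + j + 1) (j + 1)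
    rw [show n + 1 + j = n + j + 1 by omega] at ih₁
    rw [show n + (j + 1) = n + j + 1 by omega] at ih₂
    rw [show n + 1 + (j + 1) = n + j + 2 by omega]
    linear_combination h₁ + ih₁ + q ^ (j + 2) * ih₂ - q ^ (n + 1) * h₂ - h₃

lemma qStirling2_succ_succ (n k : ℕ) :
    qStirling2 (n + 1) (k + 1) =
      qStirling2 n k + (∑ i ∈ range (k + 1), q ^ i) * qStirling2 n (k + 1) := by
  rw [qStirling2]

lemma qStirling2_of_lt : ∀ {n k : ℕ}, n < k → qStirling2 n k = 0
  | 0, _ + 1, _ => by rw [qStirling2]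
  | n + 1, k + 1, h => by
    rw [qStirling2, qStirling2_of_lt (by omega : n < k), qStirling2_of_lt (by omega : n < k + 1)]
    ring

lemma qStirling2_self : ∀ n : ℕ, qStirling2 n n = 1
  | 0 => by rw [qStirling2]
  | n + 1 => by rw [qStirling2, qStirling2_self n, qStirling2_of_lt n.lt_succ_self]; ring

lemma qStirling2_succ_one : ∀ n : ℕ, qStirling2 (n + 1) 1 = 1
  | 0 => qStirling2_self 1
  | n + 1 => by rw [qStirling2_succ_succ, qStirling2_succ_one n, qStirling2]; simp

/-- The sum in the closed formula for `S₂[N+1, k+1]`, indexed by `k` and `m = N - k`. -/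
noncomputable def carlitzSum (k m : ℕ) : RatFunc ℚ :=
  ∑ j ∈ range (m + 1), (-q) ^ j * ((k + m).choose (k + j) : RatFunc ℚ) * qbinom (k + j) j

lemma carlitzSum_zero_right (k : ℕ) : carlitzSum k 0 = 1 := by
  simp [carlitzSum, qbinom]

lemma carlitzSum_zero_left (m : ℕ) : carlitzSum 0 m = (1 - q) ^ m := by
  rw [sub_eq_neg_add, add_pow, carlitzSum]
  refine sum_congr rfl fun j _ => ?_
  rw [Nat.zero_add, Nat.zero_add, qbinom_self, one_pow]
  ring

lemma carlitzSum_succ_succ (k m : ℕ) :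
    carlitzSum (k + 1) (m + 1) =
      carlitzSum k (m + 1) + (1 - q ^ (k + 2)) * carlitzSum (k + 1) m := by
  have upper : ∑ j ∈ range (m + 2),
      (-q) ^ j * ((k + m + 1).choose (k + 1 + j) : RatFunc ℚ) * qbinom (k + 1 + j) j =
        carlitzSum (k + 1) m := by
    rw [sum_range_succ, Nat.choose_eq_zero_of_lt (by omega), carlitzSum,
      show k + 1 + m = k + m + 1 by omega]
    simp
  have lower : ∑ j ∈ range (m + 2),
      (-q) ^ j * ((k + m + 1).choose (k + j) : RatFunc ℚ) * qbinom (k + 1 + j) j =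
        carlitzSum k (m + 1) - q ^ (k + 2) * carlitzSum (k + 1) m := by
    have shift : ∀ j ∈ range (m + 1),
        (-q) ^ (j + 1) * ((k + m + 1).choose (k + (j + 1)) : RatFunc ℚ) *
            qbinom (k + 1 + (j + 1)) (j + 1) =
          (-q) ^ (j + 1) * ((k + (m + 1)).choose (k + (j + 1)) : RatFunc ℚ) *
              qbinom (k + (j + 1)) (j + 1) -
            q ^ (k + 2) * ((-q) ^ j * ((k + 1 + m).choose (k + 1 + j) : RatFunc ℚ) *
              qbinom (k + 1 + j) j) := by
      intro j _
      rw [show k + 1 + (j + 1) = k + 1 + j + 1 by omega, qbinom_add_succ_succ,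
        show k + (j + 1) = k + 1 + j by omega, show k + (m + 1) = k + 1 + m by omega,
        show k + m + 1 = k + 1 + m by omega]
      ring
    rw [sum_range_succ', sum_congr rfl shift, sum_sub_distrib, ← mul_sum, carlitzSum, carlitzSum,
      sum_range_succ' _ (m + 1)]
    simp only [pow_zero, one_mul, Nat.add_zero, qbinom.eq_1, mul_one,
      show k + (m + 1) = k + m + 1 by omega]
    ring
  have pascal : carlitzSum (k + 1) (m + 1) =
      ∑ j ∈ range (m + 2),
          (-q) ^ j * ((k + m + 1).choose (k + j) : RatFunc ℚ) * qbinom (k + 1 + j) j +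
        ∑ j ∈ range (m + 2),
          (-q) ^ j * ((k + m + 1).choose (k + 1 + j) : RatFunc ℚ) * qbinom (k + 1 + j) j := by
    rw [carlitzSum, ← sum_add_distrib]
    refine sum_congr rfl fun j _ => ?_
    rw [show k + 1 + (m + 1) = k + m + 1 + 1 by omega, show k + 1 + j = k + j + 1 by omega,
      Nat.choose_succ_succ']
    push_cast
    ring
  linear_combination pascal + lower + upper

lemma one_sub_X_pow_mul_qStirling2 : ∀ k m : ℕ,
    (1 - q) ^ m * qStirling2 (k + m + 1) (k + 1) = carlitzSum k m
  | k, 0 => by rw [pow_zero, one_mul, qStirling2_self, carlitzSum_zero_right]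
  | 0, m + 1 => by rw [Nat.zero_add, qStirling2_succ_one, mul_one, carlitzSum_zero_left]
  | k + 1, m + 1 => by
    have ih₁ := one_sub_X_pow_mul_qStirling2 k (m + 1)
    have ih₂ := one_sub_X_pow_mul_qStirling2 (k + 1) m
    have geom := mul_neg_geom_sum q (k + 2)
    rw [show k + (m + 1) + 1 = k + 1 + (m + 1) by omega] at ih₁
    rw [show k + 1 + m + 1 = k + 1 + (m + 1) by omega] at ih₂
    rw [qStirling2_succ_succ, carlitzSum_succ_succ]
    linear_combination ih₁ + (1 - q ^ (k + 2)) * ih₂ +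
      (1 - q) ^ m * qStirling2 (k + 1 + (m + 1)) (k + 1 + 1) * geom

lemma one_sub_X_ne_zero : (1 - q) ≠ 0 := by
  refine sub_ne_zero.mpr fun h => ?_
  simpa using congrArg RatFunc.intDegree h

theorem stmt1 (N k : ℕ) (h : k ≤ N) :
    qStirling2 (N + 1) (k + 1) =
      ((1 - RatFunc.X : RatFunc ℚ) ^ (N - k))⁻¹ *
        ∑ j ∈ Finset.range (N - k + 1),
          (-RatFunc.X : RatFunc ℚ) ^ j * (N.choose (k + j) : RatFunc ℚ) * qbinom (k + j) j := by
  obtain ⟨m, rfl⟩ := Nat.exists_eq_add_of_le h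
  rw [Nat.add_sub_cancel_left]
  change _ = _ * carlitzSum k m
  rw [← one_sub_X_pow_mul_qStirling2, inv_mul_cancel_left₀ (pow_ne_zero _ one_sub_X_ne_zero)]
end

section
/- For any permutation σ of {1,…,n}, with σ̃ defined by σ̃(k) = n+1−σ^{−1}(n+1−k), the number of crossings of σ equals the number of crossings of σ̃, where a crossing of σ is a pair (i,j) with either i < j ≤ σ(i) < σ(j) or σ(i) < σ(j) < i < j. -/
/-- The reverse complement of the inverse of `σ`:  `σ̃(k) = n+1−σ⁻¹(n+1−k)`
(0-indexed: `σ̃(k) = rev (σ⁻¹ (rev k))`). -/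
def tildePerm {n : ℕ} (σ : Equiv.Perm (Fin n)) : Equiv.Perm (Fin n) :=
  Fin.revPerm.trans (σ⁻¹.trans Fin.revPerm)

/-- The number of crossings of `σ`: pairs `(i,j)` with `i < j ≤ σ(i) < σ(j)`
or `σ(i) < σ(j) < i < j`. -/
def crossings {n : ℕ} (σ : Equiv.Perm (Fin n)) : ℕ :=
  ((Finset.univ : Finset (Fin n × Fin n)).filter fun p =>
    (p.1 < p.2 ∧ p.2 ≤ σ p.1 ∧ σ p.1 < σ p.2) ∨
    (σ p.1 < σ p.2 ∧ σ p.2 < p.1 ∧ p.1 < p.2)).card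

/-!
The map `(i, j) ↦ (n+1−σ(j), n+1−σ(i))` is a bijection from the crossings of `σ` onto those of
`σ̃`: since `σ̃` sends this pair to `(n+1−j, n+1−i)`, the chain of inequalities defining a crossing
of `σ̃` at it is the chain defining a crossing of `σ` at `(i, j)`, read backwards through `k ↦ n+1−k`.
-/

theorem tildePerm_apply_rev_apply {n : ℕ} (σ : Equiv.Perm (Fin n)) (i : Fin n) :
    tildePerm σ (σ i).rev = i.rev := by
  simp [tildePerm]

theorem stmt5 (n : ℕ) (σ : Equiv.Perm (Fin n)) :
    crossings σ = crossings (tildePerm σ) := by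
  let τ : Equiv.Perm (Fin n) := σ.trans Fin.revPerm
  refine Finset.card_equiv ((Equiv.prodComm _ _).trans (τ.prodCongr τ)) fun ⟨i, j⟩ => ?_
  simp only [Finset.mem_filter, Finset.mem_univ, true_and, Equiv.trans_apply,
    Equiv.prodComm_apply, Prod.swap_prod_mk, Equiv.prodCongr_apply, Prod.map, τ,
    Fin.revPerm_apply, tildePerm_apply_rev_apply, Fin.rev_lt_rev, Fin.rev_le_rev]
  tauto
end

section
/- For any permutation σ of {1,…,n}, with σ̃ defined by σ̃(k) = n+1−σ^{−1}(n+1−k), the number of special left-to-right maxima of σ equals the number of special left-to-right maxima of σ̃, where j is a special left-to-right maximum if σ(j) = max_{1≤i≤j} σ(i) and σ(j) > σ(1). -/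
open scoped Classical

/-- The number of special left-to-right maxima of `σ`: indices `j` such that
`σ(j) = max_{i ≤ j} σ(i)` and `σ(j) > σ(1)` (0-indexed: `σ(j) > σ(0)`). -/
noncomputable def specialLRMax {n : ℕ} (σ : Equiv.Perm (Fin (n + 1))) : ℕ :=
  (Finset.univ.filter fun j : Fin (n + 1) =>
    (∀ i ≤ j, σ i ≤ σ j) ∧ σ 0 < σ j).card

/-!
`j` is a left-to-right maximum of `σ` iff no point of the graph `{(i, σ i)}` lies strictly to
the upper left of `(j, σ j)`. The graph of `σ̃` is the graph of `σ` reflected in the diagonal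
and then rotated by a half turn, which preserves this condition; hence `j ↦ rev (σ j)` is a
bijection from the left-to-right maxima of `σ` onto those of `σ̃`. Position `0` is always a
left-to-right maximum, and the special ones are exactly the others.
-/

open Finset

section LRMax

variable {α β : Type*}

def IsLRMax [Preorder α] [Preorder β] (f : α → β) (j : α) : Prop :=
  ∀ i ≤ j, f i ≤ f j

lemma isLRMax_iff_forall_lt [PartialOrder α] [PartialOrder β] {f : α → β}
    (hf : Function.Injective f) (j : α) : IsLRMax f j ↔ ∀ i < j, f i < f j :=
  forall_congr' fun _ =>
    ⟨fun h hij => (h hij.le).lt_of_ne (hf.ne hij.ne),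
      fun h hij => hij.eq_or_lt.elim (fun e => e ▸ le_rfl) fun hlt => (h hlt).le⟩

lemma isLRMax_bot [PartialOrder α] [OrderBot α] [Preorder β] (f : α → β) :
    IsLRMax f ⊥ :=
  fun _ hi => (le_bot_iff.mp hi).symm ▸ le_rfl

end LRMax

lemma tildePerm_apply {n : ℕ} (σ : Equiv.Perm (Fin n)) (k : Fin n) :
    tildePerm σ k = (σ⁻¹ k.rev).rev := by
  simp [tildePerm]

lemma isLRMax_tildePerm_rev_apply_iff {n : ℕ} (σ : Equiv.Perm (Fin n)) (j : Fin n) :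
    IsLRMax (tildePerm σ) (σ j).rev ↔ IsLRMax σ j := by
  rw [isLRMax_iff_forall_lt σ.injective, IsLRMax, ← (σ.trans Fin.revPerm).forall_congr_right]
  simp only [Equiv.trans_apply, Fin.revPerm_apply, tildePerm_apply, Fin.rev_rev,
    Equiv.Perm.inv_def, Equiv.symm_apply_apply, Fin.rev_le_rev]
  exact forall_congr' fun i => le_imp_le_iff_lt_imp_lt

lemma card_isLRMax_tildePerm {n : ℕ} (σ : Equiv.Perm (Fin n)) :
    #{k | IsLRMax (tildePerm σ) k} = #{j | IsLRMax σ j} :=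
  (card_equiv (σ.trans Fin.revPerm) fun j => by
    simp [isLRMax_tildePerm_rev_apply_iff]).symm

lemma specialLRMax_eq_card_isLRMax_sub_one {n : ℕ} (σ : Equiv.Perm (Fin (n + 1))) :
    specialLRMax σ = #{j | IsLRMax σ j} - 1 := by
  have hspecial : ({j | (∀ i ≤ j, σ i ≤ σ j) ∧ σ 0 < σ j} : Finset (Fin (n + 1))) =
      ({j | IsLRMax σ j} : Finset _).erase 0 := by
    ext j
    simp only [mem_filter, mem_univ, true_and, mem_erase]
    exact ⟨fun ⟨h, h0⟩ => ⟨fun hj => h0.ne (congrArg σ hj.symm), h⟩,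
      fun ⟨hj, h⟩ => ⟨h, (h 0 (Fin.zero_le j)).lt_of_ne (σ.injective.ne (Ne.symm hj))⟩⟩
  rw [specialLRMax, hspecial, card_erase_of_mem (by simpa [bot_eq_zero] using isLRMax_bot σ)]

theorem stmt6 (n : ℕ) (σ : Equiv.Perm (Fin (n + 1))) :
    specialLRMax σ = specialLRMax (tildePerm σ) := by
  rw [specialLRMax_eq_card_isLRMax_sub_one, specialLRMax_eq_card_isLRMax_sub_one,
    card_isLRMax_tildePerm]
end

section
/- The generating function, with weight (1+y) per horizontal step and y per down-step, of Motzkin prefixes of length N and final height m (lattice paths with steps +1, 0, −1 staying nonnegative) equals ∑_{j=0}^{N−m} y^j (C(N,j)·C(N, m+j) − C(N, j−1)·C(N, m+j+1)). -/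
open scoped Classical

/-- A step: `0 ↦ −1` (down), `1 ↦ 0` (horizontal), `2 ↦ +1` (up). -/
def stepVal (a : Fin 3) : ℤ := (a : ℤ) - 1

/-- Height of a Motzkin-type path after `t` steps. -/
def mHt {m : ℕ} (f : Fin m → Fin 3) (t : ℕ) : ℤ :=
  ∑ s ∈ Finset.univ.filter (fun s : Fin m => s.val < t), stepVal (f s)

/-- Motzkin prefixes of length `N` with final height `e`. -/
noncomputable def motzkinPrefixes (N : ℕ) (e : ℤ) : Finset (Fin N → Fin 3) :=
  Finset.univ.filter fun f => (∀ t : ℕ, 0 ≤ mHt f t) ∧ mHt f N = e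

/-- Number of horizontal steps. -/
def hSteps {N : ℕ} (f : Fin N → Fin 3) : ℕ := (Finset.univ.filter fun s => f s = 1).card

/-- Number of down-steps. -/
def dSteps {N : ℕ} (f : Fin N → Fin 3) : ℕ := (Finset.univ.filter fun s => f s = 0).card

/-!
Both sides, as functions `W N m` of the length and the final height, satisfy the recurrence
`W (N + 1) m = W N (m - 1) + (1 + y) W N m + y W N (m + 1)` for `m ≥ 0`, vanish at `m = -1`
and equal `[m = 0]` at `N = 0`. For the path count this is the decomposition by the last step;
for the binomial side it follows from Pascal's rule applied to each of the four binomials, and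
the vanishing at `m = -1` is the cancellation of the two products.
-/

namespace Motzkin

open Finset

lemma intChoose_of_neg {N : ℕ} {b : ℤ} (h : b < 0) : intChoose N b = 0 :=
  if_neg (by omega)

lemma intChoose_of_lt {N : ℕ} {b : ℤ} (h : (N : ℤ) < b) : intChoose N b = 0 := by
  rw [intChoose, if_pos (by omega), Nat.choose_eq_zero_of_lt (by omega)]

lemma intChoose_natCast (N k : ℕ) : intChoose N k = N.choose k := by
  simp [intChoose]

lemma intChoose_succ (N : ℕ) (b : ℤ) :
    intChoose (N + 1) b = intChoose N b + intChoose N (b - 1) := by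
  rcases lt_trichotomy b 0 with h | rfl | h
  · simp only [intChoose_of_neg h, intChoose_of_neg (show b - 1 < 0 by omega)]
  · simp [intChoose]
  · obtain ⟨k, rfl⟩ : ∃ k : ℕ, b = k + 1 := ⟨b.toNat - 1, by omega⟩
    rw [add_sub_cancel_right, ← Nat.cast_succ, intChoose_natCast, intChoose_natCast,
      intChoose_natCast, Nat.choose_succ_succ', add_comm]

def ballotCoeff (N : ℕ) (m j : ℤ) : ℤ :=
  intChoose N j * intChoose N (m + j) - intChoose N (j - 1) * intChoose N (m + j + 1)

lemma ballotCoeff_neg_one (N : ℕ) (j : ℤ) : ballotCoeff N (-1) j = 0 := by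
  rw [ballotCoeff, show -1 + j + 1 = j by ring, show -1 + j = j - 1 by ring]
  ring

lemma ballotCoeff_of_neg {N : ℕ} {m j : ℤ} (h : j < 0) : ballotCoeff N m j = 0 := by
  rw [ballotCoeff, intChoose_of_neg h, intChoose_of_neg (show j - 1 < 0 by omega)]
  simp

lemma ballotCoeff_of_lt {N : ℕ} {m j : ℤ} (hm : -1 ≤ m) (h : (N : ℤ) < j) :
    ballotCoeff N m j = 0 := by
  rcases hm.eq_or_lt with rfl | hm
  · exact ballotCoeff_neg_one N j
  · rw [ballotCoeff, intChoose_of_lt h, intChoose_of_lt (show (N : ℤ) < m + j by omega),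
      intChoose_of_lt (show (N : ℤ) < m + j + 1 by omega)]
    simp

lemma ballotCoeff_succ (N : ℕ) (m j : ℤ) :
    ballotCoeff (N + 1) m j = ballotCoeff N (m - 1) j + ballotCoeff N m j
      + ballotCoeff N m (j - 1) + ballotCoeff N (m + 1) (j - 1) := by
  simp only [ballotCoeff, intChoose_succ]
  push_cast
  -- `ring_nf` also normalizes the arguments of `intChoose`, e.g. `m + j - 1` to `m - 1 + j`.
  ring_nf

section Algebraic

variable {R : Type*} [CommRing R]

def ballotSum (y : R) (N : ℕ) (m : ℤ) : R :=
  ∑ j ∈ range (N + 1), y ^ j * ballotCoeff N m j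

lemma ballotSum_neg_one (y : R) (N : ℕ) : ballotSum y N (-1) = 0 := by
  simp [ballotSum, ballotCoeff_neg_one]

lemma ballotSum_zero (y : R) {m : ℤ} (hm : 0 ≤ m) :
    ballotSum y 0 m = if m = 0 then 1 else 0 := by
  rcases hm.eq_or_lt with rfl | hm
  · simp [ballotSum, ballotCoeff, intChoose]
  · simp [ballotSum, ballotCoeff, intChoose_of_lt (show ((0 : ℕ) : ℤ) < m by simpa), hm.ne',
      intChoose_of_neg]

lemma sum_range_add_two_ballotCoeff (y : R) (N : ℕ) {m : ℤ} (hm : -1 ≤ m) :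
    ∑ j ∈ range (N + 1 + 1), y ^ j * ballotCoeff N m j = ballotSum y N m := by
  rw [sum_range_succ, ballotCoeff_of_lt hm (by push_cast; omega), Int.cast_zero, mul_zero,
    add_zero, ballotSum]

lemma sum_range_add_two_ballotCoeff_sub_one (y : R) (N : ℕ) (m : ℤ) :
    ∑ j ∈ range (N + 1 + 1), y ^ j * ballotCoeff N m (j - 1) = y * ballotSum y N m := by
  rw [sum_range_succ', ballotSum, mul_sum]
  simp [ballotCoeff_of_neg, pow_succ', mul_assoc]

lemma ballotSum_succ (y : R) (N : ℕ) {m : ℤ} (hm : 0 ≤ m) :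
    ballotSum y (N + 1) m =
      ballotSum y N (m - 1) + (1 + y) * ballotSum y N m + y * ballotSum y N (m + 1) := by
  rw [ballotSum]
  simp only [ballotCoeff_succ, Int.cast_add, mul_add, sum_add_distrib]
  rw [sum_range_add_two_ballotCoeff y N (by omega), sum_range_add_two_ballotCoeff y N (by omega),
    sum_range_add_two_ballotCoeff_sub_one, sum_range_add_two_ballotCoeff_sub_one]
  ring

end Algebraic

section Paths

variable {R : Type*} [CommSemiring R]

lemma mHt_of_le {N : ℕ} (f : Fin N → Fin 3) {t : ℕ} (ht : N ≤ t) : mHt f t = mHt f N := by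
  unfold mHt
  congr 1
  ext s
  simp [s.isLt.trans_le ht]

lemma mHt_snoc {N : ℕ} (f : Fin N → Fin 3) (a : Fin 3) (t : ℕ) :
    mHt (Fin.snoc f a) t = mHt f t + if N < t then stepVal a else 0 := by
  simp [mHt, sum_filter, Fin.sum_univ_castSucc]

lemma hSteps_snoc {N : ℕ} (f : Fin N → Fin 3) (a : Fin 3) :
    hSteps (Fin.snoc f a) = hSteps f + if a = 1 then 1 else 0 := by
  rw [hSteps, hSteps, card_filter, card_filter, Fin.sum_univ_castSucc]
  simp

lemma dSteps_snoc {N : ℕ} (f : Fin N → Fin 3) (a : Fin 3) :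
    dSteps (Fin.snoc f a) = dSteps f + if a = 0 then 1 else 0 := by
  rw [dSteps, dSteps, card_filter, card_filter, Fin.sum_univ_castSucc]
  simp

lemma motzkinPrefixes_of_neg {N : ℕ} {e : ℤ} (he : e < 0) : motzkinPrefixes N e = ∅ := by
  ext f
  simp only [motzkinPrefixes, mem_filter, mem_univ, true_and, notMem_empty, iff_false, not_and]
  intro hnonneg hend
  linarith [hnonneg N]

lemma snoc_mem_motzkinPrefixes_iff {N : ℕ} {e : ℤ} (he : 0 ≤ e) (f : Fin N → Fin 3)
    (a : Fin 3) :
    Fin.snoc f a ∈ motzkinPrefixes (N + 1) e ↔ f ∈ motzkinPrefixes N (e - stepVal a) := by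
  have hend : mHt (Fin.snoc f a) (N + 1) = mHt f N + stepVal a := by
    rw [mHt_snoc, if_pos N.lt_succ_self, mHt_of_le f N.le_succ]
  have hbefore : ∀ t ≤ N, mHt (Fin.snoc f a) t = mHt f t := fun t ht => by
    rw [mHt_snoc, if_neg (by omega), add_zero]
  simp only [motzkinPrefixes, mem_filter, mem_univ, true_and, hend]
  constructor
  · rintro ⟨hnonneg, hsum⟩
    refine ⟨fun t => ?_, by omega⟩
    rcases le_or_gt t N with ht | ht
    · exact hbefore t ht ▸ hnonneg t
    · exact mHt_of_le f ht.le ▸ hbefore N le_rfl ▸ hnonneg N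
  · rintro ⟨hnonneg, hsum⟩
    refine ⟨fun t => ?_, by omega⟩
    rcases le_or_gt t N with ht | ht
    · exact hbefore t ht ▸ hnonneg t
    · rw [mHt_snoc, if_pos ht, mHt_of_le f ht.le]
      omega

def pathWeight (y : R) {N : ℕ} (f : Fin N → Fin 3) : R := (1 + y) ^ hSteps f * y ^ dSteps f

def stepWeight (y : R) : Fin 3 → R := ![y, 1 + y, 1]

lemma pathWeight_snoc (y : R) {N : ℕ} (f : Fin N → Fin 3) (a : Fin 3) :
    pathWeight y (Fin.snoc f a) = pathWeight y f * stepWeight y a := by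
  rw [pathWeight, pathWeight, hSteps_snoc, dSteps_snoc]
  fin_cases a <;> simp [stepWeight, pow_succ] <;> ring

noncomputable def weightSum (y : R) (N : ℕ) (e : ℤ) : R :=
  ∑ f ∈ motzkinPrefixes N e, pathWeight y f

lemma weightSum_zero (y : R) (e : ℤ) : weightSum y 0 e = if e = 0 then 1 else 0 := by
  split_ifs with he <;>
    simp [weightSum, motzkinPrefixes, mHt, pathWeight, hSteps, dSteps, eq_comm, he]

lemma weightSum_of_neg (y : R) (N : ℕ) {e : ℤ} (he : e < 0) : weightSum y N e = 0 := by
  rw [weightSum, motzkinPrefixes_of_neg he, sum_empty]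

lemma weightSum_succ_eq_sum_last_step (y : R) (N : ℕ) {e : ℤ} (he : 0 ≤ e) :
    weightSum y (N + 1) e = ∑ a, stepWeight y a * weightSum y N (e - stepVal a) := by
  rw [weightSum, ← Fintype.sum_ite_mem, ← (Fin.snocEquiv fun _ => Fin 3).sum_comp,
    Fintype.sum_prod_type]
  refine sum_congr rfl fun a _ => ?_
  rw [weightSum, mul_sum, ← Fintype.sum_ite_mem (motzkinPrefixes N _)]
  refine sum_congr rfl fun f _ => ?_
  rw [show (Fin.snocEquiv fun _ => Fin 3) (a, f) = Fin.snoc f a from rfl]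
  simp only [snoc_mem_motzkinPrefixes_iff he, pathWeight_snoc, mul_comm]

lemma weightSum_succ (y : R) (N : ℕ) {e : ℤ} (he : 0 ≤ e) :
    weightSum y (N + 1) e =
      weightSum y N (e - 1) + (1 + y) * weightSum y N e + y * weightSum y N (e + 1) := by
  rw [weightSum_succ_eq_sum_last_step y N he, Fin.sum_univ_three]
  simp [stepWeight, stepVal, sub_eq_add_neg]
  ring

end Paths

section Identity

variable {R : Type*} [CommRing R]

theorem weightSum_eq_ballotSum (y : R) (N : ℕ) {m : ℤ} (hm : -1 ≤ m) :
    weightSum y N m = ballotSum y N m := by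
  induction N generalizing m with
  | zero =>
    rcases hm.eq_or_lt with rfl | hm
    · rw [weightSum_of_neg y 0 (by norm_num), ballotSum_neg_one]
    · rw [weightSum_zero, ballotSum_zero y (by omega)]
  | succ N ih =>
    rcases hm.eq_or_lt with rfl | hm
    · rw [weightSum_of_neg y _ (by norm_num), ballotSum_neg_one]
    · rw [weightSum_succ y N (by omega), ballotSum_succ y N (by omega), ih (by omega),
        ih (by omega), ih (by omega)]

lemma ballotCoeff_natCast (N m j : ℕ) :
    (ballotCoeff N m j : R) = (N.choose j : R) * N.choose (m + j)
      - (intChoose N ((j : ℤ) - 1) : R) * N.choose (m + j + 1) := by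
  rw [ballotCoeff, ← Nat.cast_add, ← Nat.cast_add_one, intChoose_natCast, intChoose_natCast,
    intChoose_natCast]
  push_cast
  ring

lemma ballotSum_natCast (y : R) (N m : ℕ) :
    ballotSum y N m = ∑ j ∈ range (N - m + 1),
      y ^ j * ((N.choose j : R) * N.choose (m + j)
        - (intChoose N ((j : ℤ) - 1) : R) * N.choose (m + j + 1)) := by
  simp only [ballotSum, ballotCoeff_natCast]
  refine (sum_subset (range_subset_range.mpr (by omega)) fun j _ hj => ?_).symm
  rw [mem_range] at hj
  rw [Nat.choose_eq_zero_of_lt (show N < m + j by omega),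
    Nat.choose_eq_zero_of_lt (show N < m + j + 1 by omega)]
  simp

end Identity

end Motzkin

theorem stmt12 (N m : ℕ) (y : ℝ) :
    ∑ f ∈ motzkinPrefixes N m, (1 + y) ^ hSteps f * y ^ dSteps f
      = ∑ j ∈ Finset.range (N - m + 1),
          y ^ j * ((N.choose j : ℝ) * (N.choose (m + j) : ℝ)
            - (intChoose N ((j : ℤ) - 1) : ℝ) * (N.choose (m + j + 1) : ℝ)) :=
  (Motzkin.weightSum_eq_ballotSum y N (by omega)).trans (Motzkin.ballotSum_natCast y N m)
end

section
/- Define the polynomials F_n(y) by the functional equation H(t,y) = 1 + t(L(t,y) − 1)H(t,y), where L(t,y) = ∑_{n≥0} ∑_k N(n,k) y^k t^n is the Narayana generating function (with N(0,0)=1) and H(t,y) = ∑_{n≥0} F_n(y) t^n. Then each F_n(y) is self-reciprocal: F_n(y) = y^n · F_n(1/y) for all n ≥ 2, as an identity of Laurent polynomials. -/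
/-!
Since `N(n,k) = N(n,n+1-k)`, the `n`-th coefficient of `L - 1` is self-reciprocal of degree
`n + 1` (and the constant one vanishes). The functional equation gives
`F_{m+1} = ∑_{i+j=m} [tⁱ](L - 1) · F_j`, and a product of polynomials self-reciprocal of
degrees `a` and `b` is self-reciprocal of degree `a + b`, so strong induction on `n` shows
that `F_n` is self-reciprocal of degree `n` for every `n`.
-/

def narayana (n k : ℕ) : ℕ := n.choose k * n.choose (k - 1) / n

open Polynomial Finset

theorem narayana_symm {n k : ℕ} (hk : 1 ≤ k) (hkn : k ≤ n) :
    narayana n (n + 1 - k) = narayana n k := by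
  unfold narayana
  rw [show n + 1 - k = n - (k - 1) by omega, show n - (k - 1) - 1 = n - k by omega,
    Nat.choose_symm (by omega), Nat.choose_symm hkn, mul_comm]

section SelfReciprocal

variable {R : Type*} [Semiring R]

/-- `p(y) = y^N p(1/y)`: the degree bound is what makes `reflect N p` equal to `y^N p(1/y)`. -/
def IsSelfReciprocal (N : ℕ) (p : R[X]) : Prop :=
  p.natDegree ≤ N ∧ reflect N p = p

theorem isSelfReciprocal_zero (N : ℕ) : IsSelfReciprocal N (0 : R[X]) :=
  ⟨by simp, reflect_zero⟩

theorem isSelfReciprocal_one : IsSelfReciprocal 0 (1 : R[X]) :=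
  ⟨by simp, by simp [reflect_one]⟩

theorem IsSelfReciprocal.add {N : ℕ} {p q : R[X]} (hp : IsSelfReciprocal N p)
    (hq : IsSelfReciprocal N q) : IsSelfReciprocal N (p + q) :=
  ⟨natDegree_add_le_of_degree_le hp.1 hq.1, by rw [reflect_add, hp.2, hq.2]⟩

theorem IsSelfReciprocal.mul {M N : ℕ} {p q : R[X]} (hp : IsSelfReciprocal M p)
    (hq : IsSelfReciprocal N q) : IsSelfReciprocal (M + N) (p * q) :=
  ⟨natDegree_mul_le.trans (add_le_add hp.1 hq.1), by rw [reflect_mul _ _ hp.1 hq.1, hp.2, hq.2]⟩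

theorem isSelfReciprocal_sum {ι : Type*} {N : ℕ} (s : Finset ι) {f : ι → R[X]}
    (hf : ∀ i ∈ s, IsSelfReciprocal N (f i)) : IsSelfReciprocal N (∑ i ∈ s, f i) :=
  Finset.sum_induction f (IsSelfReciprocal N) (fun _ _ => IsSelfReciprocal.add)
    (isSelfReciprocal_zero N) hf

theorem reflect_sum {ι : Type*} (N : ℕ) (s : Finset ι) (f : ι → R[X]) :
    reflect N (∑ i ∈ s, f i) = ∑ i ∈ s, reflect N (f i) := by
  induction s using Finset.cons_induction with
  | empty => simp [reflect_zero]
  | cons a s ha ih => rw [sum_cons, reflect_add, ih, sum_cons]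

end SelfReciprocal

section FunctionalEquation

variable {S : Type*} [Semiring S] {A H : PowerSeries S}

theorem coeff_zero_of_eq_one_add_X_mul (hH : H = 1 + PowerSeries.X * A * H) :
    PowerSeries.coeff 0 H = 1 := by
  rw [hH, map_add, PowerSeries.coeff_one, if_pos rfl, mul_assoc, PowerSeries.coeff_zero_X_mul,
    add_zero]

theorem coeff_succ_of_eq_one_add_X_mul (hH : H = 1 + PowerSeries.X * A * H) (m : ℕ) :
    PowerSeries.coeff (m + 1) H
      = ∑ p ∈ antidiagonal m, PowerSeries.coeff p.1 A * PowerSeries.coeff p.2 H := by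
  conv_lhs => rw [hH]
  rw [map_add, PowerSeries.coeff_one, if_neg m.succ_ne_zero, mul_assoc,
    PowerSeries.coeff_succ_X_mul, PowerSeries.coeff_mul, zero_add]

theorem isSelfReciprocal_coeff_of_eq_one_add_X_mul {R : Type*} [Semiring R]
    {A H : PowerSeries R[X]} (hA : ∀ i, IsSelfReciprocal (i + 1) (PowerSeries.coeff i A))
    (hH : H = 1 + PowerSeries.X * A * H) (n : ℕ) :
    IsSelfReciprocal n (PowerSeries.coeff n H) := by
  induction n using Nat.strong_induction_on with
  | _ n ih =>
    cases n with
    | zero => rw [coeff_zero_of_eq_one_add_X_mul hH]; exact isSelfReciprocal_one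
    | succ m =>
      rw [coeff_succ_of_eq_one_add_X_mul hH]
      refine isSelfReciprocal_sum _ fun p hp => ?_
      rw [HasAntidiagonal.mem_antidiagonal] at hp
      have hdeg : m + 1 = (p.1 + 1) + p.2 := by omega
      exact hdeg ▸ (hA p.1).mul (ih p.2 (by omega))

end FunctionalEquation

noncomputable def narayanaPoly (n : ℕ) : ℚ[X] :=
  ∑ k ∈ Icc 1 n, (narayana n k : ℚ[X]) * X ^ k

theorem isSelfReciprocal_narayanaPoly (n : ℕ) : IsSelfReciprocal (n + 1) (narayanaPoly n) := by
  have hterm : ∀ k ∈ Icc 1 n, reflect (n + 1) ((narayana n k : ℚ[X]) * X ^ k)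
      = (narayana n (n + 1 - k) : ℚ[X]) * X ^ (n + 1 - k) := by
    intro k hk
    rw [mem_Icc] at hk
    rw [← C_eq_natCast, reflect_C_mul_X_pow, revAt_le (by omega), narayana_symm hk.1 hk.2,
      C_eq_natCast]
  refine ⟨natDegree_sum_le_of_forall_le _ _ fun k hk => ?_, ?_⟩
  · rw [mem_Icc] at hk
    rw [← C_eq_natCast]
    exact (natDegree_C_mul_X_pow_le _ k).trans (by omega)
  · rw [narayanaPoly, reflect_sum, sum_congr rfl hterm]
    exact sum_nbij' (n + 1 - ·) (n + 1 - ·) (by simp only [mem_Icc]; omega)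
      (by simp only [mem_Icc]; omega) (by simp only [mem_Icc]; omega)
      (by simp only [mem_Icc]; omega) fun _ _ => rfl

/-- If `H(t,y) = 1 + t(L(t,y) − 1)H(t,y)` where `L` is the Narayana generating
function, then the coefficients `F_n(y)` of `H` are self-reciprocal for `n ≥ 2`:
`F_n(y) = y^n F_n(1/y)`, i.e. `F_n` equals its reflection at degree `n`. -/
theorem stmt14 (L H : PowerSeries (Polynomial ℚ))
    (hL0 : PowerSeries.coeff (R := Polynomial ℚ) 0 L = 1)
    (hL : ∀ n, 1 ≤ n → PowerSeries.coeff (R := Polynomial ℚ) n L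
        = ∑ k ∈ Finset.Icc 1 n, (narayana n k : Polynomial ℚ) * Polynomial.X ^ k)
    (hH : H = 1 + PowerSeries.X * (L - 1) * H) :
    ∀ n, 2 ≤ n → PowerSeries.coeff (R := Polynomial ℚ) n H
        = Polynomial.reflect n (PowerSeries.coeff (R := Polynomial ℚ) n H) := by
  have hA : ∀ i, IsSelfReciprocal (i + 1) (PowerSeries.coeff i (L - 1)) := by
    intro i
    rcases Nat.eq_zero_or_pos i with rfl | hi
    · rw [map_sub, hL0, PowerSeries.coeff_zero_one, sub_self]
      exact isSelfReciprocal_zero 1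
    · rw [map_sub, hL i hi, PowerSeries.coeff_one, if_neg hi.ne', sub_zero]
      exact isSelfReciprocal_narayanaPoly i
  intro n _
  exact (isSelfReciprocal_coeff_of_eq_one_add_X_mul hA hH n).2.symm
end

section
/- Let F_n(y) = ∑_P y^{pk(P)}, where the sum is over Fine paths P of length 2n and pk(P) is the number of peaks of P. Then F_n(y) = y^n F_n(1/y); equivalently, the coefficient of y^k in F_n equals the coefficient of y^{n−k}. -/
open scoped Classical

namespace FinePaths
def bal (l : List Bool) : ℤ := (l.map fun b => if b then (1:ℤ) else -1).sum
@[simp] lemma bal_nil : bal [] = 0 := rfl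
@[simp] lemma bal_cons (b : Bool) (l : List Bool) :
    bal (b :: l) = (if b then (1:ℤ) else -1) + bal l := rfl
@[simp] lemma bal_append (x y : List Bool) : bal (x ++ y) = bal x + bal y := by
  simp [bal]
def DyckL (l : List Bool) : Prop := (∀ t, 0 ≤ bal (l.take t)) ∧ bal l = 0
def splitInner : ℕ → List Bool → List Bool × List Bool
  | _, [] => ([], [])
  | h, true :: t =>
      let p := splitInner (h+1) t
      (true :: p.1, p.2)
  | h, false :: t =>
      if h = 1 then ([], t)
      else
        let p := splitInner (h-1) t
        (false :: p.1, p.2)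

lemma splitInner_length (h : ℕ) (r : List Bool) :
    (splitInner h r).1.length + (splitInner h r).2.length ≤ r.length := by
  induction r generalizing h with
  | nil => simp [splitInner]
  | cons b t ih =>
    cases b <;> simp only [splitInner]
    · split
      · simp
      · have := ih (h-1); simp at this ⊢; omega
    · have := ih (h+1); simp at this ⊢; omega

/-- computation: splitInner finds the decomposition -/
lemma splitInner_comp (A B : List Bool) (h : ℕ) (h1 : 1 ≤ h)
    (hpre : ∀ t, t ≤ A.length → 1 ≤ (h:ℤ) + bal (A.take t))
    (htot : (h:ℤ) + bal A = 1) :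
    splitInner h (A ++ false :: B) = (A, B) := by
  induction A generalizing h with
  | nil =>
    have : h = 1 := by simp at htot; omega
    subst this; simp [splitInner]
  | cons b t ih =>
    cases b
    · -- b = false
      have h2 : 2 ≤ h := by
        have := hpre 1 (by simp)
        simp [List.take] at this; omega
      simp only [List.cons_append, splitInner, if_neg (by omega : ¬ h = 1)]
      have := ih (h-1) (by omega)
        (fun s hs => by
          have := hpre (s+1) (by simp; omega)
          simp [List.take] at this
          push_cast [Nat.cast_sub (by omega : 1 ≤ h)]
          omega)
        (by simp at htot; push_cast [Nat.cast_sub (by omega : 1 ≤ h)]; omega)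
      rw [this]
    · -- b = true
      simp only [List.cons_append, splitInner]
      have := ih (h+1) (by omega)
        (fun s hs => by
          have := hpre (s+1) (by simp; omega)
          simp [List.take] at this
          push_cast; omega)
        (by simp at htot; push_cast; omega)
      rw [this]

/-- specification: on a word whose prefixes stay ≥ -h and total is -h, splitInner
produces a genuine decomposition. -/
lemma splitInner_spec (r : List Bool) (h : ℕ) (h1 : 1 ≤ h)
    (hpre : ∀ t, 0 ≤ (h:ℤ) + bal (r.take t))
    (htot : (h:ℤ) + bal r = 0) :
    ∃ A B, splitInner h r = (A, B) ∧ r = A ++ false :: B ∧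
      (∀ t, t ≤ A.length → 1 ≤ (h:ℤ) + bal (A.take t)) ∧ (h:ℤ) + bal A = 1 := by
  induction r generalizing h with
  | nil => simp at htot; omega
  | cons b t ih =>
    cases b
    · by_cases hh : h = 1
      · subst hh
        refine ⟨[], t, by simp [splitInner], by simp, ?_, by simp⟩
        intro s hs; simp at hs; subst hs; simp
      · have h2 : 2 ≤ h := by omega
        obtain ⟨A, B, hsplit, hdec, hA, hbal⟩ := ih (h-1) (by omega)
          (fun s => by
            have := hpre (s+1)
            simp [List.take] at this
            push_cast [Nat.cast_sub (by omega : 1 ≤ h)]; omega)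
          (by simp at htot; push_cast [Nat.cast_sub (by omega : 1 ≤ h)]; omega)
        refine ⟨false :: A, B, ?_, by simp [hdec], ?_, ?_⟩
        · simp only [splitInner, if_neg hh, hsplit]
        · intro s hs
          match s with
          | 0 => simpa using h1
          | s+1 =>
            have := hA s (by simpa using hs)
            simp [List.take]
            push_cast [Nat.cast_sub (by omega : 1 ≤ h)] at this ⊢; omega
        · simp; push_cast [Nat.cast_sub (by omega : 1 ≤ h)] at hbal ⊢; omega
    · obtain ⟨A, B, hsplit, hdec, hA, hbal⟩ := ih (h+1) (by omega)
        (fun s => by have := hpre (s+1); simp [List.take] at this; push_cast; omega)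
        (by simp at htot; push_cast; omega)
      refine ⟨true :: A, B, ?_, by simp [hdec], ?_, ?_⟩
      · simp only [splitInner, hsplit]
      · intro s hs
        match s with
        | 0 => simpa using h1
        | s+1 =>
          have := hA s (by simpa using hs)
          simp [List.take] at this ⊢
          push_cast at this ⊢; omega
      · simp at hbal ⊢; push_cast at hbal ⊢; omega

lemma take_app_decomp (A B : List Bool) (t : ℕ) :
    (A ++ false :: B).take (A.length + 1 + t) = A ++ false :: B.take t := by
  rw [List.take_append, List.take_of_length_le (by omega)]
  congr 1
  have : A.length + 1 + t - A.length = t + 1 := by omega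
  rw [this]; rfl

lemma dyck_decomp {r : List Bool} (hd : DyckL (true :: r)) :
    ∃ A B, splitInner 1 r = (A, B) ∧ r = A ++ false :: B ∧ DyckL A ∧ DyckL B := by
  obtain ⟨A, B, hsplit, hdec, hA, hbal⟩ := splitInner_spec r 1 le_rfl
    (fun t => by have := hd.1 (t+1); simpa [List.take] using this)
    (by have := hd.2; simp at this; omega)
  have hbalA : bal A = 0 := by omega
  have hbalB : bal B = 0 := by
    have := hd.2; rw [hdec] at this; simp at this; omega
  refine ⟨A, B, hsplit, hdec, ⟨fun t => ?_, hbalA⟩, ⟨fun t => ?_, hbalB⟩⟩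
  · by_cases ht : t ≤ A.length
    · have := hA t ht; omega
    · rw [List.take_of_length_le (by omega)]; omega
  · have := hd.1 (A.length + 2 + t)
    have e : (true :: r).take (A.length + 2 + t) = true :: (A ++ false :: B.take t) := by
      rw [hdec, show A.length + 2 + t = (A.length + 1 + t) + 1 from by omega]
      rw [List.take_succ_cons, take_app_decomp]
    rw [e] at this
    simp at this
    omega

lemma dyck_cons_append {A B : List Bool} (hA : DyckL A) (hB : DyckL B) :
    DyckL (true :: A ++ false :: B) := by
  constructor
  · intro t
    match t with
    | 0 => simp
    | t+1 =>
      rw [List.cons_append, List.take_succ_cons]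
      rw [List.take_append]
      simp only [bal_cons, bal_append, if_true]
      by_cases ht : t ≤ A.length
      · have h1 := hA.1 t
        rw [show t - A.length = 0 from by omega]
        simp; omega
      · rw [List.take_of_length_le (by omega), hA.2]
        have e : t - A.length = (t - A.length - 1) + 1 := by omega
        rw [e, List.take_succ_cons]
        have := hB.1 (t - A.length - 1)
        simp; omega
  · simp [hA.2, hB.2]

lemma splitInner_dyck {A : List Bool} (B : List Bool) (hA : DyckL A) :
    splitInner 1 (A ++ false :: B) = (A, B) :=
  splitInner_comp A B 1 le_rfl (fun t _ => by have := hA.1 t; push_cast; omega)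
    (by simp [hA.2])

lemma dyck_head {l : List Bool} (hd : DyckL l) (hne : l ≠ []) : ∃ r, l = true :: r := by
  match l with
  | true :: r => exact ⟨r, rfl⟩
  | false :: r => have := hd.1 1; simp [List.take] at this

lemma dyck_getLast {l : List Bool} (hd : DyckL l) (hne : l ≠ []) :
    l.getLast? = some false := by
  obtain ⟨m, b, e⟩ : ∃ m b, l = m ++ [b] := by
    rcases List.eq_nil_or_concat l with h | ⟨m, b, h⟩
    · exact absurd h hne
    · exact ⟨m, b, by simpa using h⟩
  subst e
  have h1 := hd.1 m.length
  rw [List.take_append, List.take_length, Nat.sub_self] at h1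
  simp at h1
  have h2 := hd.2
  simp at h2
  cases b
  · simp
  · simp at h2; omega

def pk : List Bool → ℕ
  | [] => 0
  | [_] => 0
  | a :: b :: t => (if a = true ∧ b = false then 1 else 0) + pk (b :: t)

@[simp] lemma pk_nil : pk [] = 0 := rfl
@[simp] lemma pk_single (a : Bool) : pk [a] = 0 := rfl
lemma pk_cons_cons (a b : Bool) (t : List Bool) :
    pk (a :: b :: t) = (if a = true ∧ b = false then 1 else 0) + pk (b :: t) := rfl

lemma pk_append (x y : List Bool) :
    pk (x ++ y) = pk x + pk y +
      (if x.getLast? = some true ∧ y.head? = some false then 1 else 0) := by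
  induction x with
  | nil => simp
  | cons a x ih =>
    match x with
    | [] =>
      match y with
      | [] => simp
      | b :: t =>
        simp only [List.cons_append, List.nil_append, pk_cons_cons, pk_single]
        simp [List.getLast?]
        omega
    | c :: t =>
      simp only [List.cons_append] at ih ⊢
      rw [pk_cons_cons, pk_cons_cons, ih, List.getLast?_cons_cons]
      ring

lemma pk_false_cons (B : List Bool) : pk (false :: B) = pk B := by
  match B with
  | [] => rfl
  | b :: t => rw [pk_cons_cons]; simp

lemma pk_comp {A B : List Bool} (hA : DyckL A) (hB : DyckL B) :
    pk (true :: A ++ false :: B) = (if A = [] then 1 else pk A) + pk B := by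
  rw [show true :: A ++ false :: B = (true :: A) ++ (false :: B) from rfl]
  rw [pk_append, pk_false_cons]
  by_cases hAe : A = []
  · subst hAe; simp; omega
  · obtain ⟨r, hr⟩ := dyck_head hA hAe
    have hlast : (true :: A).getLast? = some false := by
      rw [show (true :: A).getLast? = A.getLast? from by
        cases A with | nil => exact absurd rfl hAe | cons c s => rw [List.getLast?_cons_cons]]
      exact dyck_getLast hA hAe
    rw [hlast]
    have hpkA : pk (true :: A) = pk A := by
      rw [hr, pk_cons_cons]; simp
    rw [hpkA]
    simp [hAe]

def lkAux : List Bool → List Bool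
  | [] => []
  | false :: r => false :: r
  | true :: r =>
      true :: lkAux (splitInner 1 r).2 ++ false :: lkAux (splitInner 1 r).1
termination_by l => l.length
decreasing_by
  · have := splitInner_length 1 r; simp at *; omega
  · have := splitInner_length 1 r; simp at *; omega

def fineMap : List Bool → List Bool
  | [] => []
  | false :: r => false :: r
  | true :: r =>
      true :: lkAux (splitInner 1 r).1 ++ false :: fineMap (splitInner 1 r).2
termination_by l => l.length
decreasing_by
  · have := splitInner_length 1 r; simp at *; omega

@[simp] lemma lkAux_nil : lkAux [] = [] := by rw [lkAux]
@[simp] lemma fineMap_nil : fineMap [] = [] := by rw [fineMap]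

lemma lkAux_decomp {A : List Bool} (B : List Bool) (hA : DyckL A) :
    lkAux (true :: A ++ false :: B) = true :: lkAux B ++ false :: lkAux A := by
  rw [show true :: A ++ false :: B = true :: (A ++ false :: B) from rfl]
  rw [lkAux, splitInner_dyck B hA]

lemma fineMap_decomp {A : List Bool} (B : List Bool) (hA : DyckL A) :
    fineMap (true :: A ++ false :: B) = true :: lkAux A ++ false :: fineMap B := by
  rw [show true :: A ++ false :: B = true :: (A ++ false :: B) from rfl]
  rw [fineMap, splitInner_dyck B hA]

lemma lk_main : ∀ (N : ℕ) (l : List Bool), l.length ≤ N → DyckL l →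
    DyckL (lkAux l) ∧ (lkAux l).length = l.length ∧ lkAux (lkAux l) = l ∧
      (l ≠ [] → 2 * pk (lkAux l) + 2 * pk l = l.length + 2) := by
  intro N
  induction N with
  | zero =>
    intro l hl _
    have : l = [] := by
      cases l with | nil => rfl | cons a t => simp at hl
    subst this
    simp [DyckL]
  | succ N ih =>
    intro l hl hd
    by_cases hne : l = []
    · subst hne; simp [DyckL]
    · obtain ⟨r, hr⟩ := dyck_head hd hne
      subst hr
      obtain ⟨A, B, hsplit, hdec, hA, hB⟩ := dyck_decomp hd
      subst hdec
      have hlen : A.length + B.length + 2 = (true :: A ++ false :: B).length := by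
        simp; omega
      have ihA := ih A (by simp at hl; omega) hA
      have ihB := ih B (by simp at hl; omega) hB
      rw [show true :: (A ++ false :: B) = true :: A ++ false :: B from rfl] at *
      rw [lkAux_decomp B hA]
      obtain ⟨hdA, hlA, hiA, hpA⟩ := ihA
      obtain ⟨hdB, hlB, hiB, hpB⟩ := ihB
      refine ⟨dyck_cons_append hdB hdA, by simp; omega, ?_, ?_⟩
      · rw [lkAux_decomp (lkAux A) hdB, hiA, hiB]
      · intro _
        rw [pk_comp hdB hdA, pk_comp hA hB]
        have heB : lkAux B = [] ↔ B = [] := by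
          constructor <;> intro h
          · have := hlB; rw [h] at this; simpa using this.symm
          · rw [h, lkAux_nil]
        have hlen2 : (true :: A ++ false :: B).length = A.length + B.length + 2 := by
          simp; omega
        rw [hlen2]
        by_cases hBe : B = [] <;> by_cases hAe : A = []
        · subst hBe; subst hAe; simp
        · have h1 := hpA hAe
          have h2 : lkAux B = [] := heB.mpr hBe
          subst hBe
          rw [if_pos h2, if_neg hAe]
          simp at h1 ⊢
          omega
        · have h2 := hpB hBe
          have h3 : lkAux B ≠ [] := fun h => hBe (heB.mp h)
          subst hAe
          rw [if_neg h3, if_pos rfl]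
          simp at h2 ⊢
          omega
        · have h1 := hpA hAe
          have h2 := hpB hBe
          have h3 : lkAux B ≠ [] := fun h => hBe (heB.mp h)
          rw [if_neg h3, if_neg hAe]
          omega

def FineL (l : List Bool) : Prop :=
  DyckL l ∧ ¬ ∃ t, bal (l.take t) = 0 ∧ l[t]? = some true ∧ l[t+1]? = some false

lemma fine_iff {A B : List Bool} (hA : DyckL A) (hB : DyckL B) :
    FineL (true :: A ++ false :: B) ↔ (A ≠ [] ∧ FineL B) := by
  set l := true :: A ++ false :: B with hl
  have e1 : ∀ s, l.take (A.length + 2 + s) = true :: A ++ false :: B.take s := by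
    intro s
    rw [hl, show A.length + 2 + s = (A.length + 1 + s) + 1 from by omega]
    rw [List.cons_append, List.take_succ_cons, take_app_decomp]
    simp
  have e2 : ∀ s, l[A.length + 2 + s]? = B[s]? := by
    intro s
    rw [hl, List.cons_append,
      show A.length + 2 + s = (A.length + 1 + s) + 1 from by omega,
      List.getElem?_cons_succ, List.getElem?_append_right (by omega),
      show A.length + 1 + s - A.length = s + 1 from by omega, List.getElem?_cons_succ]
  have ebal : ∀ s, s ≤ A.length → bal (l.take (s+1)) = 1 + bal (A.take s) := by
    intro s hs
    rw [hl, List.cons_append, List.take_succ_cons, List.take_append,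
      show s - A.length = 0 from by omega]
    simp
  constructor
  · rintro ⟨hd, hno⟩
    constructor
    · intro hAe
      subst hAe
      exact hno ⟨0, by simp, by simp [hl], by simp [hl]⟩
    · refine ⟨hB, fun ⟨t, h0, h1, h2⟩ => hno ⟨A.length + 2 + t, ?_, ?_, ?_⟩⟩
      · rw [e1 t]; simp [hA.2, h0]
      · rw [e2 t]; exact h1
      · rw [show A.length + 2 + t + 1 = A.length + 2 + (t+1) from by omega, e2 (t+1)]
        exact h2
  · rintro ⟨hAne, hBd, hBno⟩
    refine ⟨dyck_cons_append hA hB, fun ⟨t, h0, h1, h2⟩ => ?_⟩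
    rcases Nat.eq_zero_or_pos t with ht0 | htpos
    · subst ht0
      obtain ⟨r, hr⟩ := dyck_head hA hAne
      rw [hl, List.cons_append, List.getElem?_cons_succ,
        List.getElem?_append_left (by rw [hr]; simp)] at h2
      rw [hr] at h2
      simp at h2
    · by_cases hts : t ≤ A.length + 1
      · obtain ⟨s, rfl⟩ : ∃ s, t = s + 1 := ⟨t - 1, by omega⟩
        rw [ebal s (by omega)] at h0
        have := hA.1 s
        omega
      · obtain ⟨s, rfl⟩ : ∃ s, t = A.length + 2 + s := ⟨t - A.length - 2, by omega⟩
        rw [e1 s] at h0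
        simp [hA.2] at h0
        refine hBno ⟨s, by omega, ?_, ?_⟩
        · rw [← e2 s]; exact h1
        · rw [← e2 (s+1), show A.length + 2 + (s+1) = A.length + 2 + s + 1 from by omega]
          exact h2

lemma fine_main : ∀ (N : ℕ) (l : List Bool), l.length ≤ N → FineL l →
    FineL (fineMap l) ∧ (fineMap l).length = l.length ∧ fineMap (fineMap l) = l ∧
      2 * pk (fineMap l) + 2 * pk l = l.length := by
  intro N
  induction N with
  | zero =>
    intro l hl _
    have : l = [] := by cases l with | nil => rfl | cons a t => simp at hl
    subst this
    refine ⟨⟨by simp [DyckL], ?_⟩, by simp, by simp, by simp⟩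
    rintro ⟨t, _, h1, _⟩
    simp at h1
  | succ N ih =>
    intro l hl hf
    by_cases hne : l = []
    · subst hne
      refine ⟨⟨by simp [DyckL], ?_⟩, by simp, by simp, by simp⟩
      rintro ⟨t, _, h1, _⟩
      simp at h1
    · obtain ⟨r, hr⟩ := dyck_head hf.1 hne
      subst hr
      obtain ⟨A, B, hsplit, hdec, hA, hB⟩ := dyck_decomp hf.1
      subst hdec
      rw [show true :: (A ++ false :: B) = true :: A ++ false :: B from rfl] at *
      obtain ⟨hAne, hBf⟩ := (fine_iff hA hB).mp hf
      have ihB := ih B (by simp at hl; omega) hBf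
      obtain ⟨hBf', hlB, hiB, hpB⟩ := ihB
      have lkA := lk_main A.length A le_rfl hA
      obtain ⟨hdA, hlA, hiA, hpA⟩ := lkA
      have hlkAne : lkAux A ≠ [] := by
        intro h
        rw [h] at hlA
        exact hAne (List.eq_nil_of_length_eq_zero hlA.symm)
      rw [fineMap_decomp B hA]
      refine ⟨(fine_iff hdA hBf'.1).mpr ⟨hlkAne, hBf'⟩, by simp; omega, ?_, ?_⟩
      · rw [fineMap_decomp (fineMap B) hdA, hiA, hiB]
      · rw [pk_comp hdA hBf'.1, pk_comp hA hB, if_neg hlkAne, if_neg hAne]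
        have := hpA hAne
        simp
        omega

lemma pk_eq_card (l : List Bool) :
    pk l = ((Finset.range l.length).filter fun t =>
        l[t]? = some true ∧ l[t+1]? = some false).card := by
  classical
  induction l with
  | nil => simp
  | cons a m ih =>
    simp only [Finset.card_filter] at ih ⊢
    simp only [List.length_cons]
    rw [Finset.sum_range_succ']
    simp only [List.getElem?_cons_succ]
    rw [← ih]
    match m with
    | [] => simp
    | b :: t =>
      rw [pk_cons_cons]
      simp only [List.getElem?_cons_zero]
      have : ((some a = some true ∧ some b = some false) ↔ (a = true ∧ b = false)) := by simp
      rw [if_congr this rfl rfl]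
      omega
end FinePaths

/-- The height of a ±1 path (true = up-step, false = down-step) after `t` steps. -/
def pathHt {m : ℕ} (f : Fin m → Bool) (t : ℕ) : ℤ :=
  ∑ s ∈ Finset.univ.filter (fun s : Fin m => s.val < t), (if f s then 1 else -1)

/-- Dyck paths of length `2n`: ±1 paths staying nonnegative and ending at 0. -/
def isDyck {n : ℕ} (f : Fin (2 * n) → Bool) : Prop :=
  (∀ t : ℕ, 0 ≤ pathHt f t) ∧ pathHt f (2 * n) = 0

/-- A Fine path: a Dyck path admitting no factorization `D = D₁·(up,down)·D₂`
with `D₁, D₂` Dyck paths, i.e. no peak starting at height `0`. -/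
def isFine {n : ℕ} (f : Fin (2 * n) → Bool) : Prop :=
  isDyck f ∧ ¬ ∃ (t : ℕ) (h : t + 1 < 2 * n),
      pathHt f t = 0 ∧ f ⟨t, Nat.lt_of_succ_lt h⟩ = true ∧ f ⟨t + 1, h⟩ = false

/-- The number of peaks (an up-step immediately followed by a down-step). -/
noncomputable def peaks {n : ℕ} (f : Fin (2 * n) → Bool) : ℕ :=
  (Finset.univ.filter fun t : Fin (2 * n) =>
    ∃ h : t.val + 1 < 2 * n, f t = true ∧ f ⟨t.val + 1, h⟩ = false).card

open FinePaths

lemma bridge_getElem {m : ℕ} (f : Fin m → Bool) (i : ℕ) :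
    (List.ofFn f)[i]? = if h : i < m then some (f ⟨i, h⟩) else none := by
  rw [List.getElem?_ofFn]

lemma bridge_pathHt {m : ℕ} (f : Fin m → Bool) (t : ℕ) :
    pathHt f t = bal ((List.ofFn f).take t) := by
  induction t with
  | zero => simp [pathHt, bal]
  | succ t ih =>
    by_cases h : t < m
    · have e : (List.ofFn f).take (t+1) = (List.ofFn f).take t ++ [f ⟨t, h⟩] := by
        rw [List.take_succ, bridge_getElem, dif_pos h]
        rfl
      have e2 : Finset.univ.filter (fun s : Fin m => s.val < t+1)
          = insert ⟨t, h⟩ (Finset.univ.filter (fun s : Fin m => s.val < t)) := by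
        ext s
        simp [Fin.ext_iff]
        omega
      rw [e, bal_append, ← ih, pathHt, pathHt, e2, Finset.sum_insert (by simp)]
      simp [bal]
      ring
    · have e : (List.ofFn f).take (t+1) = (List.ofFn f).take t := by
        rw [List.take_of_length_le (by simp; omega), List.take_of_length_le (by simp; omega)]
      have e2 : Finset.univ.filter (fun s : Fin m => s.val < t+1)
          = Finset.univ.filter (fun s : Fin m => s.val < t) := by
        ext s
        simp
        omega
      rw [e, ← ih, pathHt, pathHt, e2]

lemma bridge_dyck {n : ℕ} (f : Fin (2*n) → Bool) : isDyck f ↔ DyckL (List.ofFn f) := by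
  constructor
  · rintro ⟨h1, h2⟩
    refine ⟨fun t => by rw [← bridge_pathHt]; exact h1 t, ?_⟩
    rw [← List.take_of_length_le (le_of_eq (List.length_ofFn (f := f))), ← bridge_pathHt]
    exact h2
  · rintro ⟨h1, h2⟩
    refine ⟨fun t => by rw [bridge_pathHt]; exact h1 t, ?_⟩
    rw [bridge_pathHt, List.take_of_length_le (le_of_eq (List.length_ofFn (f := f)))]
    exact h2

lemma bridge_fine {n : ℕ} (f : Fin (2*n) → Bool) : isFine f ↔ FineL (List.ofFn f) := by
  rw [isFine, FineL, bridge_dyck]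
  constructor
  · rintro ⟨hd, hno⟩
    refine ⟨hd, fun ⟨t, h0, h1, h2⟩ => hno ⟨t, ?_, ?_, ?_, ?_⟩⟩
    · rw [bridge_getElem] at h2
      split at h2
      · omega
      · exact absurd h2 (by simp)
    · rw [← bridge_pathHt] at h0; exact h0
    · rw [bridge_getElem] at h1
      split at h1
      · simpa using h1
      · exact absurd h1 (by simp)
    · rw [bridge_getElem] at h2
      split at h2
      · simpa using h2
      · exact absurd h2 (by simp)
  · rintro ⟨hd, hno⟩
    refine ⟨hd, fun ⟨t, ht, h0, h1, h2⟩ => hno ⟨t, by rw [bridge_pathHt] at h0; exact h0,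
      ?_, ?_⟩⟩
    · rw [bridge_getElem, dif_pos (by omega)]
      simpa using h1
    · rw [bridge_getElem, dif_pos ht]
      simpa using h2

lemma bridge_peaks {n : ℕ} (f : Fin (2*n) → Bool) : peaks f = pk (List.ofFn f) := by
  classical
  rw [peaks, pk_eq_card, Finset.card_filter, Finset.card_filter, List.length_ofFn]
  rw [← Fin.sum_univ_eq_sum_range (fun i =>
    if (List.ofFn f)[i]? = some true ∧ (List.ofFn f)[i+1]? = some false then 1 else 0) (2*n)]
  apply Finset.sum_congr rfl
  intro t _
  rw [bridge_getElem, bridge_getElem, dif_pos t.isLt]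
  apply if_congr _ rfl rfl
  constructor
  · rintro ⟨h, h1, h2⟩
    rw [dif_pos h]
    simp [h1, h2]
  · rintro ⟨h1, h2⟩
    split at h2
    · refine ⟨by omega, by simpa using h1, by simpa using h2⟩
    · exact absurd h2 (by simp)

lemma phi_main {n : ℕ} (f : Fin (2*n) → Bool) (hf : isFine f) :
    List.ofFn (fun i : Fin (2*n) => (fineMap (List.ofFn f)).getD i.val false)
        = fineMap (List.ofFn f)
      ∧ isFine (fun i : Fin (2*n) => (fineMap (List.ofFn f)).getD i.val false)
      ∧ 2 * peaks (fun i : Fin (2*n) => (fineMap (List.ofFn f)).getD i.val false)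
          + 2 * peaks f = 2 * n := by
  have hl : FineL (List.ofFn f) := (bridge_fine f).mp hf
  obtain ⟨hFm, hLen, hInv, hPk⟩ :=
    fine_main (List.ofFn f).length (List.ofFn f) le_rfl hl
  have hLen2 : (fineMap (List.ofFn f)).length = 2 * n := by
    rw [hLen, List.length_ofFn]
  have hofFn : List.ofFn (fun i : Fin (2*n) => (fineMap (List.ofFn f)).getD i.val false)
      = fineMap (List.ofFn f) := by
    apply List.ext_getElem?
    intro i
    rw [bridge_getElem]
    split
    · rename_i h
      rw [List.getD_eq_getElem _ _ (by omega), List.getElem?_eq_getElem (by omega)]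
    · rename_i h
      rw [eq_comm, List.getElem?_eq_none]
      omega
  refine ⟨hofFn, ?_, ?_⟩
  · rw [bridge_fine, hofFn]
    exact hFm
  · rw [bridge_peaks, bridge_peaks, hofFn]
    rw [List.length_ofFn] at hPk
    omega

/-- The peak statistic on Fine paths is symmetric: the number of Fine paths of
length `2n` with `k` peaks equals the number with `n − k` peaks. -/
theorem stmt15 (n k : ℕ) (hk : k ≤ n) :
    (Finset.univ.filter fun f : Fin (2 * n) → Bool => isFine f ∧ peaks f = k).card
      = (Finset.univ.filter fun f : Fin (2 * n) → Bool =>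
          isFine f ∧ peaks f = n - k).card := by
  classical
  have key : ∀ f : Fin (2*n) → Bool, isFine f →
      (fun i : Fin (2*n) =>
        (fineMap (List.ofFn (fun j : Fin (2*n) =>
          (fineMap (List.ofFn f)).getD j.val false))).getD i.val false) = f := by
    intro f hf
    obtain ⟨hofFn, hFm, _⟩ := phi_main f hf
    funext i
    rw [hofFn]
    have hl : FineL (List.ofFn f) := (bridge_fine f).mp hf
    obtain ⟨_, _, hInv, _⟩ := fine_main (List.ofFn f).length (List.ofFn f) le_rfl hl
    rw [hInv, List.getD_eq_getElem _ _ (by simp [i.isLt]), List.getElem_ofFn]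
  refine Finset.card_bij'
    (fun f _ => fun i : Fin (2*n) => (fineMap (List.ofFn f)).getD i.val false)
    (fun f _ => fun i : Fin (2*n) => (fineMap (List.ofFn f)).getD i.val false)
    ?_ ?_ ?_ ?_
  · intro f hf
    simp only [Finset.mem_filter, Finset.mem_univ, true_and] at hf ⊢
    obtain ⟨h1, h2⟩ := hf
    obtain ⟨_, hFm, hPk⟩ := phi_main f h1
    exact ⟨hFm, by omega⟩
  · intro f hf
    simp only [Finset.mem_filter, Finset.mem_univ, true_and] at hf ⊢
    obtain ⟨h1, h2⟩ := hf
    obtain ⟨_, hFm, hPk⟩ := phi_main f h1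
    exact ⟨hFm, by omega⟩
  · intro f hf
    simp only [Finset.mem_filter, Finset.mem_univ, true_and] at hf
    exact key f hf.1
  · intro f hf
    simp only [Finset.mem_filter, Finset.mem_univ, true_and] at hf
    exact key f hf.1
end
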